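/- For every integer k ≥ 1 and every real δ with 0 ≤ δ ≤ 1, the point w₊(k+1) + (0, 0, −δ) belongs to (K + (0, 0, −δ)) ∩ (K + (w₊(k) + w₊(k+1) − u₁)) ∩ (K + (w₊(k+1) + w₊(k+2) − u₁)). -/
import Mathlib


open Pointwise

/-- `w₋(j) = (0, −∑_{t=1}^{j} 1/t², ∑_{t=1}^{j} 1/t³)`. -/
noncomputable def wM (j : ℕ) : Fin 3 → ℝ :=
  ![0, -(∑ t ∈ Finset.Icc 1 j, (1 : ℝ) / (t : ℝ) ^ 2),
    ∑ t ∈ Finset.Icc 1 j, (1 : ℝ) / (t : ℝ) ^ 3]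

/-- `w₊(k) = (∑_{t=1}^{k} 1/t², ∑_{t=1}^{k} 1/t³, 0)`. -/
noncomputable def wP (k : ℕ) : Fin 3 → ℝ :=
  ![∑ t ∈ Finset.Icc 1 k, (1 : ℝ) / (t : ℝ) ^ 2,
    ∑ t ∈ Finset.Icc 1 k, (1 : ℝ) / (t : ℝ) ^ 3, 0]

/-- `ζ₂ = ∑_{t=1}^{∞} 1/t²`. -/
noncomputable def zeta2 : ℝ := ∑' t : ℕ, (1 : ℝ) / ((t : ℝ) + 1) ^ 2

/-- `ζ₃ = ∑_{t=1}^{∞} 1/t³`. -/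
noncomputable def zeta3 : ℝ := ∑' t : ℕ, (1 : ℝ) / ((t : ℝ) + 1) ^ 3

/-- `u₁ = (ζ₂, −2, ζ₃)`. -/
noncomputable def uOne : Fin 3 → ℝ := ![zeta2, -2, zeta3]

/-- `u₀ = (ζ₂, −2, 0)`. -/
noncomputable def uZero : Fin 3 → ℝ := ![zeta2, -2, 0]

/-- `v(j,k) = (1/(j+1)³)·w(j,k) + (((j+1)³ − 1)/(j+1)³)·w(j,k+1)` where
`w(j,k) = w₋(j) + w₊(k)`. -/
noncomputable def vU (j k : ℕ) : Fin 3 → ℝ :=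
  ((1 : ℝ) / ((j : ℝ) + 1) ^ 3) • (wM j + wP k) +
    ((((j : ℝ) + 1) ^ 3 - 1) / ((j : ℝ) + 1) ^ 3) • (wM j + wP (k + 1))

/-- The universal convex body `K`: the closure of the convex hull of the points
`w₋(j)`, `v(j,k)`, `u₀ − w₊(k)` and `u₁ − w₊(k)`. -/
noncomputable def KU : Set (Fin 3 → ℝ) :=
  closure (convexHull ℝ
    (Set.range wM ∪ (⋃ j : ℕ, Set.range (vU j)) ∪
     Set.range (fun k => uZero - wP k) ∪ Set.range (fun k => uOne - wP k)))

lemma wP_eq_vU (m : ℕ) : wP m = vU 0 m := by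
  funext i
  simp [vU, wM, wP]

lemma wP_mem_KU (m : ℕ) : wP m ∈ KU := by
  apply subset_closure
  apply subset_convexHull
  left; left; right
  exact Set.mem_iUnion.2 ⟨0, ⟨m, (wP_eq_vU m).symm⟩⟩

lemma summable3 : Summable (fun t : ℕ => (1 : ℝ) / ((t : ℝ) + 1) ^ 3) := by
  have h : Summable (fun n : ℕ => (1 : ℝ) / (n : ℝ) ^ 3) :=
    Real.summable_one_div_nat_pow.2 (by norm_num)
  have h2 := (summable_nat_add_iff 1).2 h
  simpa [Nat.cast_add] using h2

lemma one_le_zeta3 : (1 : ℝ) ≤ zeta3 := by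
  have h := Summable.le_tsum summable3 0 (fun i _ => by positivity)
  simpa [zeta3] using h

lemma key_mem (m : ℕ) (δ : ℝ) (h0 : 0 ≤ δ) (h1 : δ ≤ 1) :
    uOne - wP m + ![0, 0, -δ] ∈ KU := by
  have hz : (1 : ℝ) ≤ zeta3 := one_le_zeta3
  have hz0 : (0 : ℝ) < zeta3 := lt_of_lt_of_le one_pos hz
  set l := δ / zeta3 with hl
  have hl0 : 0 ≤ l := div_nonneg h0 hz0.le
  have hl1 : l ≤ 1 := by rw [hl, div_le_one hz0]; linarith
  apply subset_closure
  set S : Set (Fin 3 → ℝ) :=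
    Set.range wM ∪ (⋃ j : ℕ, Set.range (vU j)) ∪
     Set.range (fun k => uZero - wP k) ∪ Set.range (fun k => uOne - wP k) with hS
  have h1m : uOne - wP m ∈ convexHull ℝ S :=
    subset_convexHull ℝ S (by right; exact ⟨m, rfl⟩)
  have h0m : uZero - wP m ∈ convexHull ℝ S :=
    subset_convexHull ℝ S (by left; right; exact ⟨m, rfl⟩)
  have hc := (convex_convexHull ℝ S) h1m h0m (by linarith : (0:ℝ) ≤ 1 - l) hl0
    (by ring)
  have heq : (1 - l) • (uOne - wP m) + l • (uZero - wP m)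
      = uOne - wP m + ![0, 0, -δ] := by
    funext i
    fin_cases i <;>
      simp [uOne, uZero, wP, hl, smul_eq_mul] <;>
      field_simp <;> ring
  rw [heq] at hc
  exact hc

lemma mem_vadd_of_eq {a x y : Fin 3 → ℝ} (hy : y ∈ KU) (h : x = a + y) :
    x ∈ a +ᵥ KU := ⟨y, hy, h.symm⟩

/-- **Witness point for `A ∩ C_k ∩ C_{k+1}`.** For `k ≥ 1` and `0 ≤ δ ≤ 1`, the
point `w₊(k+1) + (0,0,−δ)` lies in the intersection of the translate of `K` by
`(0,0,−δ)` with the translates of `K` by `w₊(k) + w₊(k+1) − u₁` and by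
`w₊(k+1) + w₊(k+2) − u₁`. -/
theorem witness_A_Ck_Ck1 (k : ℕ) (hk : 1 ≤ k) (δ : ℝ) (h0 : 0 ≤ δ) (h1 : δ ≤ 1) :
    wP (k + 1) + ![0, 0, -δ] ∈
      (![(0 : ℝ), 0, -δ] +ᵥ KU) ∩ ((wP k + wP (k + 1) - uOne) +ᵥ KU) ∩
        ((wP (k + 1) + wP (k + 2) - uOne) +ᵥ KU) := by
  refine ⟨⟨?_, ?_⟩, ?_⟩
  · refine mem_vadd_of_eq (wP_mem_KU (k+1)) ?_
    funext i; fin_cases i <;> simp [wP] <;> ring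
  · refine mem_vadd_of_eq (key_mem k δ h0 h1) ?_
    funext i; fin_cases i <;> simp [wP, uOne] <;> ring
  · refine mem_vadd_of_eq (key_mem (k+2) δ h0 h1) ?_
    funext i; fin_cases i <;> simp [wP, uOne] <;> ring
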